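/- arXiv:2411.11614 — 7 statements merged into one kernel-verified Lean document; each statement's English description precedes it below -/
import Mathlib

section
/- For any probability distribution arising from a classical local hidden variable model, i.e., p(a,b|x,y) = ∑_λ q(λ)·p_A(a|x,λ)·p_B(b|y,λ) with q a probability distribution over a finite set Λ and p_A, p_B conditional distributions, the CHSH success probability (1/4)·∑_{x,y} ∑_{a⊕b=xy} p(a,b|x,y) is at most 3/4. -/
/-!
Conditioned on the hidden variable `λ`, the two parties answer independently, so the winning
probability is a `q`-average of the scores of product strategies. Writing a local response as
its correlator `E x = p(0|x) - p(1|x) ∈ [-1, 1]`, a product strategy wins the four CHSH games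
with total probability `2 + (E₀F₀ + E₀F₁ + E₁F₀ - E₁F₁) / 2`, and the bracket is at most
`|F₀ + F₁| + |F₀ - F₁| ≤ 2`.
-/

open Finset

lemma ZMod.sum_univ_two {M : Type*} [AddCommMonoid M] (f : ZMod 2 → M) :
    ∑ a, f a = f 0 + f 1 :=
  Fin.sum_univ_two f

section CorrelatorBound

variable {R : Type*} [CommRing R] [LinearOrder R] [IsStrictOrderedRing R]

lemma abs_add_add_abs_sub_le {a b c : R} (ha : |a| ≤ c) (hb : |b| ≤ c) :
    |a + b| + |a - b| ≤ 2 * c := by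
  rw [abs_le] at ha hb
  rcases abs_cases (a + b) with ⟨hs, _⟩ | ⟨hs, _⟩ <;>
    rcases abs_cases (a - b) with ⟨hd, _⟩ | ⟨hd, _⟩ <;> rw [hs, hd] <;> linarith

lemma chsh_correlator_le_two {u₀ u₁ v₀ v₁ : R}
    (hu₀ : |u₀| ≤ 1) (hu₁ : |u₁| ≤ 1) (hv₀ : |v₀| ≤ 1) (hv₁ : |v₁| ≤ 1) :
    u₀ * v₀ + u₀ * v₁ + u₁ * v₀ - u₁ * v₁ ≤ 2 := by
  have h₀ : u₀ * (v₀ + v₁) ≤ |v₀ + v₁| := by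
    refine (le_abs_self _).trans ?_
    rw [abs_mul]
    exact mul_le_of_le_one_left (abs_nonneg _) hu₀
  have h₁ : u₁ * (v₀ - v₁) ≤ |v₀ - v₁| := by
    refine (le_abs_self _).trans ?_
    rw [abs_mul]
    exact mul_le_of_le_one_left (abs_nonneg _) hu₁
  linarith [abs_add_add_abs_sub_le hv₀ hv₁]

end CorrelatorBound

namespace CHSH

/-- A local response `α a x` is the probability of output `a` on input `x`. -/
def correlator (α : ZMod 2 → ZMod 2 → ℝ) (x : ZMod 2) : ℝ :=
  α 0 x - α 1 x

def score (α β : ZMod 2 → ZMod 2 → ℝ) : ℝ :=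
  ∑ x, ∑ y, ∑ a, ∑ b, if a + b = x * y then α a x * β b y else 0

variable {α β : ZMod 2 → ZMod 2 → ℝ}

lemma abs_correlator_le_one (hα : ∀ a x, 0 ≤ α a x) (hα₁ : ∀ x, ∑ a, α a x = 1) (x : ZMod 2) :
    |correlator α x| ≤ 1 := by
  have hsum : α 0 x + α 1 x = 1 := (ZMod.sum_univ_two (α · x)).symm.trans (hα₁ x)
  rw [correlator, abs_le]
  constructor <;> linarith [hα 0 x, hα 1 x]

lemma two_mul_score (hα₁ : ∀ x, ∑ a, α a x = 1) (hβ₁ : ∀ y, ∑ b, β b y = 1) :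
    2 * score α β = 4 + (correlator α 0 * correlator β 0 + correlator α 0 * correlator β 1
      + correlator α 1 * correlator β 0 - correlator α 1 * correlator β 1) := by
  have hα : ∀ x, α 1 x = 1 - α 0 x := fun x => by
    linarith [hα₁ x, ZMod.sum_univ_two (α · x)]
  have hβ : ∀ y, β 1 y = 1 - β 0 y := fun y => by
    linarith [hβ₁ y, ZMod.sum_univ_two (β · y)]
  simp only [score, correlator, ZMod.sum_univ_two, hα, hβ, mul_one, mul_zero, add_zero,
    zero_add, show (1 : ZMod 2) + 1 = 0 from rfl, one_ne_zero, zero_ne_one, ↓reduceIte]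
  ring

lemma score_le_three (hα : ∀ a x, 0 ≤ α a x) (hα₁ : ∀ x, ∑ a, α a x = 1)
    (hβ : ∀ b y, 0 ≤ β b y) (hβ₁ : ∀ y, ∑ b, β b y = 1) :
    score α β ≤ 3 := by
  have hcorr := chsh_correlator_le_two (abs_correlator_le_one hα hα₁ 0)
    (abs_correlator_le_one hα hα₁ 1) (abs_correlator_le_one hβ hβ₁ 0)
    (abs_correlator_le_one hβ hβ₁ 1)
  linarith [two_mul_score hα₁ hβ₁]

end CHSH

theorem CHSH_local_hidden_variable_bound
    (Λ : Type) [Fintype Λ]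
    (q : Λ → ℝ) (hq : ∀ l, 0 ≤ q l) (hq1 : ∑ l, q l = 1)
    (pA : ZMod 2 → ZMod 2 → Λ → ℝ)
    (hpA : ∀ a x l, 0 ≤ pA a x l) (hpA1 : ∀ x l, ∑ a, pA a x l = 1)
    (pB : ZMod 2 → ZMod 2 → Λ → ℝ)
    (hpB : ∀ b y l, 0 ≤ pB b y l) (hpB1 : ∀ y l, ∑ b, pB b y l = 1) :
    (1 / 4 : ℝ) * ∑ x : ZMod 2, ∑ y : ZMod 2, ∑ a : ZMod 2, ∑ b : ZMod 2,
      (if a + b = x * y then ∑ l, q l * pA a x l * pB b y l else 0) ≤ 3 / 4 := by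
  have hmix : ∑ x : ZMod 2, ∑ y : ZMod 2, ∑ a : ZMod 2, ∑ b : ZMod 2,
      (if a + b = x * y then ∑ l, q l * pA a x l * pB b y l else 0) =
      ∑ l, q l * CHSH.score (fun a x => pA a x l) (fun b y => pB b y l) := by
    simp only [CHSH.score, mul_sum, mul_ite, mul_zero, ← mul_assoc,
      sum_comm (s := (univ : Finset Λ)), sum_ite_irrel, sum_const_zero]
  rw [hmix]
  calc (1 / 4 : ℝ) * _ ≤ 1 / 4 * ∑ l, q l * 3 := by
        gcongr with l
        · exact hq l
        · exact CHSH.score_le_three (hpA · · l) (hpA1 · l) (hpB · · l) (hpB1 · l)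
    _ = 3 / 4 := by rw [← sum_mul, hq1]; norm_num
end

section
/- If p is a distribution Markov with respect to the mediation DAG X → A → B → C with latent Λ → A, Λ → C, i.e., p(x,a,b,c) = ∑_λ p(x)·p(λ)·p(a|x,λ)·p(b|a)·p(c|b,λ), then the Verma constraint holds: the quantity q(c|b) := ∑_a p(a|x)·p(c|x,a,b) is independent of x, for all x with p(x) > 0 and all (a,b) in the support. -/
open Finset

/-!
Summing out `c` and then `b` from the factorization leaves `p(x,a,b) = p(x) p(b|a) f(a,x)` and
`p(x,a) = p(x) f(a,x)` with `f(a,x) = ∑_λ p(λ) p(a|x,λ)`. Hence in `p(a|x) · p(c|x,a,b)` the factors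
`p(x)`, `p(b|a)` and `f(a,x)` cancel, leaving `∑_λ p(λ) p(a|x,λ) p(c|b,λ)`; summing over `a` removes
`p(a|x,λ)` and yields `∑_λ p(λ) p(c|b,λ)`, which does not depend on `x`.
-/

section Mediation

variable {X A B C Λ R : Type*} [Fintype Λ] [Field R]

def mediationJoint (pX : X → R) (pΛ : Λ → R) (pA : A → X → Λ → R) (pB : B → A → R)
    (pC : C → B → Λ → R) (x : X) (a : A) (b : B) (c : C) : R :=
  ∑ l, pX x * pΛ l * pA a x l * pB b a * pC c b l

variable {pX : X → R} {pΛ : Λ → R} {pA : A → X → Λ → R} {pB : B → A → R} {pC : C → B → Λ → R}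

theorem mediationJoint_eq (x : X) (a : A) (b : B) (c : C) :
    mediationJoint pX pΛ pA pB pC x a b c = pX x * pB b a * ∑ l, pΛ l * pA a x l * pC c b l := by
  rw [mediationJoint, mul_sum]
  exact sum_congr rfl fun l _ ↦ by ring

variable [Fintype C]

theorem sum_mediationJoint_C (hpC1 : ∀ b l, ∑ c, pC c b l = 1) (x : X) (a : A) (b : B) :
    ∑ c, mediationJoint pX pΛ pA pB pC x a b c = pX x * pB b a * ∑ l, pΛ l * pA a x l := by
  simp only [mediationJoint_eq, ← mul_sum]
  rw [sum_comm]
  simp only [← mul_sum, hpC1, mul_one]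

variable [Fintype B]

theorem sum_mediationJoint_BC (hpB1 : ∀ a, ∑ b, pB b a = 1) (hpC1 : ∀ b l, ∑ c, pC c b l = 1)
    (x : X) (a : A) :
    ∑ b, ∑ c, mediationJoint pX pΛ pA pB pC x a b c = pX x * ∑ l, pΛ l * pA a x l := by
  simp only [sum_mediationJoint_C hpC1, mul_comm (pX x), mul_assoc, ← sum_mul, hpB1, one_mul]

variable [Fintype A]

/-- The Verma functional `∑_a p(a|x) · p(c|x,a,b)`. -/
def vermaFunctional (p : X → A → B → C → R) (pX : X → R) (x : X) (b : B) (c : C) : R :=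
  ∑ a, ((∑ b', ∑ c', p x a b' c') / pX x) * (p x a b c / ∑ c', p x a b c')

theorem vermaFunctional_mediationJoint (hpA1 : ∀ x l, ∑ a, pA a x l = 1)
    (hpB1 : ∀ a, ∑ b, pB b a = 1) (hpC1 : ∀ b l, ∑ c, pC c b l = 1) (x : X) (b : B) (c : C)
    (hsupp : ∀ a, ∑ c', mediationJoint pX pΛ pA pB pC x a b c' ≠ 0) :
    vermaFunctional (mediationJoint pX pΛ pA pB pC) pX x b c = ∑ l, pΛ l * pC c b l := by
  have hterm : ∀ a, ((∑ b', ∑ c', mediationJoint pX pΛ pA pB pC x a b' c') / pX x) *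
      (mediationJoint pX pΛ pA pB pC x a b c / ∑ c', mediationJoint pX pΛ pA pB pC x a b c') =
      ∑ l, pΛ l * pA a x l * pC c b l := by
    intro a
    have hne := hsupp a
    rw [sum_mediationJoint_C hpC1] at hne ⊢
    have hF := right_ne_zero_of_mul hne
    have hX := left_ne_zero_of_mul (left_ne_zero_of_mul hne)
    have hB := right_ne_zero_of_mul (left_ne_zero_of_mul hne)
    rw [sum_mediationJoint_BC hpB1 hpC1, mediationJoint_eq]
    field_simp
  calc vermaFunctional (mediationJoint pX pΛ pA pB pC) pX x b c
      = ∑ a, ∑ l, pΛ l * pA a x l * pC c b l := sum_congr rfl fun a _ ↦ hterm a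
    _ = ∑ l, pΛ l * pC c b l := by
      rw [sum_comm]
      simp only [← sum_mul, ← mul_sum, hpA1, mul_one]

end Mediation

theorem verma_constraint_mediation_general
    (X A B C Λ : Type) [Fintype X] [Fintype A] [Fintype B] [Fintype C] [Fintype Λ]
    (pX : X → ℝ) (pΛ : Λ → ℝ)
    (pA : A → X → Λ → ℝ) (pB : B → A → ℝ) (pC : C → B → Λ → ℝ)
    (hpA1 : ∀ x l, ∑ a, pA a x l = 1)
    (hpB1 : ∀ a, ∑ b, pB b a = 1)
    (hpC1 : ∀ b l, ∑ c, pC c b l = 1)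
    -- the joint distribution, Markov w.r.t. the mediation DAG
    (p : X → A → B → C → ℝ)
    (hp : ∀ x a b c, p x a b c = ∑ l, pX x * pΛ l * pA a x l * pB b a * pC c b l) :
    ∀ (x x' : X) (b : B) (c : C),
      0 < pX x → 0 < pX x' →
      (∀ a, 0 < ∑ c', p x a b c') → (∀ a, 0 < ∑ c', p x' a b c') →
      -- ∑_a p(a|x)·p(c|x,a,b) is independent of x
      (∑ a, ((∑ b', ∑ c', p x a b' c') / pX x) *
            (p x a b c / ∑ c', p x a b c')) =
      (∑ a, ((∑ b', ∑ c', p x' a b' c') / pX x') *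
            (p x' a b c / ∑ c', p x' a b c')) := by
  intro x x' b c _ _ hsupp hsupp'
  obtain rfl : p = mediationJoint pX pΛ pA pB pC := by
    funext y a b' c'
    exact hp y a b' c'
  change vermaFunctional _ pX x b c = vermaFunctional _ pX x' b c
  rw [vermaFunctional_mediationJoint hpA1 hpB1 hpC1 x b c fun a ↦ (hsupp a).ne',
    vermaFunctional_mediationJoint hpA1 hpB1 hpC1 x' b c fun a ↦ (hsupp' a).ne']

theorem verma_constraint_mediation
    (X A B C Λ : Type) [Fintype X] [Fintype A] [Fintype B] [Fintype C] [Fintype Λ]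
    (pX : X → ℝ) (pΛ : Λ → ℝ)
    (pA : A → X → Λ → ℝ) (pB : B → A → ℝ) (pC : C → B → Λ → ℝ)
    (hpX : ∀ x, 0 ≤ pX x) (hpX1 : ∑ x, pX x = 1)
    (hpΛ : ∀ l, 0 ≤ pΛ l) (hpΛ1 : ∑ l, pΛ l = 1)
    (hpA : ∀ a x l, 0 ≤ pA a x l) (hpA1 : ∀ x l, ∑ a, pA a x l = 1)
    (hpB : ∀ b a, 0 ≤ pB b a) (hpB1 : ∀ a, ∑ b, pB b a = 1)
    (hpC : ∀ c b l, 0 ≤ pC c b l) (hpC1 : ∀ b l, ∑ c, pC c b l = 1)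
    -- the joint distribution, Markov w.r.t. the mediation DAG
    (p : X → A → B → C → ℝ)
    (hp : ∀ x a b c, p x a b c = ∑ l, pX x * pΛ l * pA a x l * pB b a * pC c b l) :
    ∀ (x x' : X) (b : B) (c : C),
      0 < pX x → 0 < pX x' →
      (∀ a, 0 < ∑ c', p x a b c') → (∀ a, 0 < ∑ c', p x' a b c') →
      -- ∑_a p(a|x)·p(c|x,a,b) is independent of x
      (∑ a, ((∑ b', ∑ c', p x a b' c') / pX x) *
            (p x a b c / ∑ c', p x a b c')) =
      (∑ a, ((∑ b', ∑ c', p x' a b' c') / pX x') *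
            (p x' a b c / ∑ c', p x' a b c')) :=
  verma_constraint_mediation_general X A B C Λ pX pΛ pA pB pC hpA1 hpB1 hpC1 p hp
end

section
/- In the instrumental scenario, any distribution of the form p(a,b|x) = ∑_λ q(λ)·p_A(a|x,λ)·p_B(b|a,λ), with q a probability distribution on a finite set Λ, satisfies the inequality max_a ∑_b max_x p(a,b|x) ≤ 1. -/
open Finset

/-
For each hidden value `λ`, the outcome `a` is produced with probability at most `1` whatever the
input, so `max_x p(a,b|x)` is dominated by the mixture `∑_λ q(λ) max_x p_A(a|x,λ) p_B(b|a,λ)`.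
Summing over `b` removes `p_B`, leaving `∑_λ q(λ) max_x p_A(a|x,λ) ≤ ∑_λ q(λ) = 1`.
-/

theorem sum_le_sum_of_le_mixture {Λ B : Type*} [Fintype Λ] [Fintype B]
    {m : B → ℝ} {w : Λ → ℝ} {g : B → Λ → ℝ}
    (hg1 : ∀ l, ∑ b, g b l = 1) (hm : ∀ b, m b ≤ ∑ l, w l * g b l) :
    ∑ b, m b ≤ ∑ l, w l :=
  calc ∑ b, m b ≤ ∑ b, ∑ l, w l * g b l := sum_le_sum fun b _ => hm b
    _ = ∑ l, w l := by simp only [sum_comm (γ := B), ← mul_sum, hg1, mul_one]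

theorem instrumental_inequality_classical
    (Λ : Type) [Fintype Λ]
    (q : Λ → ℝ) (hq : ∀ l, 0 ≤ q l) (hq1 : ∑ l, q l = 1)
    (pA : ZMod 2 → ZMod 2 → Λ → ℝ)
    (hpA : ∀ a x l, 0 ≤ pA a x l) (hpA1 : ∀ x l, ∑ a, pA a x l = 1)
    (pB : ZMod 2 → ZMod 2 → Λ → ℝ)
    (hpB : ∀ b a l, 0 ≤ pB b a l) (hpB1 : ∀ a l, ∑ b, pB b a l = 1)
    (p : ZMod 2 → ZMod 2 → ZMod 2 → ℝ)
    (hp : ∀ a b x, p a b x = ∑ l, q l * pA a x l * pB b a l) :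
    ∀ a : ZMod 2, ∑ b : ZMod 2, max (p a b 0) (p a b 1) ≤ 1 := by
  intro a
  have hpA_le_one : ∀ x l, pA a x l ≤ 1 := fun x l =>
    hpA1 x l ▸ single_le_sum (fun a' _ => hpA a' x l) (mem_univ a)
  have hdom : ∀ b, max (p a b 0) (p a b 1) ≤
      ∑ l, q l * max (pA a 0 l) (pA a 1 l) * pB b a l := fun b => by
    rw [hp, hp]
    refine max_le ?_ ?_ <;> gcongr with l
    exacts [hpB b a l, hq l, le_max_left _ _, hpB b a l, hq l, le_max_right _ _]
  calc ∑ b, max (p a b 0) (p a b 1)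
      ≤ ∑ l, q l * max (pA a 0 l) (pA a 1 l) := sum_le_sum_of_le_mixture (hpB1 a) hdom
    _ ≤ ∑ l, q l := sum_le_sum fun l _ =>
        mul_le_of_le_one_right (hq l) (max_le (hpA_le_one 0 l) (hpA_le_one 1 l))
    _ = 1 := hq1
end

section
/- Any no-signalling bipartite distribution projected to the instrumental scenario satisfies max_a ∑_b max_x p(a,b|x) ≤ 1. Precisely: if P(a,b|x,y) (a,b,x,y ∈ {0,1}) is a no-signalling distribution and p(a,b|x) := P(a,b|x, y=a), then max_a ∑_b max_x p(a,b|x) ≤ 1. -/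
open Finset

/-- Each term is bounded by Bob's marginal, which by no-signalling does not see Alice's input,
so Alice's input may even be chosen depending on Bob's outcome. -/
theorem sum_le_one_of_bob_marginal_indep {A B X Y : Type*} [Fintype A] [Fintype B] [Nonempty X]
    (P : A → B → X → Y → ℝ) (hnn : ∀ a b x y, 0 ≤ P a b x y)
    (hnorm : ∀ x y, ∑ a, ∑ b, P a b x y = 1)
    (hnsA : ∀ b x x' y, ∑ a, P a b x y = ∑ a, P a b x' y)
    (a : A) (x : B → X) (y : Y) :
    ∑ b, P a b (x b) y ≤ 1 := by
  let x₀ : X := Classical.arbitrary X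
  calc ∑ b, P a b (x b) y
      ≤ ∑ b, ∑ a', P a' b (x b) y :=
        sum_le_sum fun b _ => single_le_sum (fun a' _ => hnn a' b (x b) y) (mem_univ a)
    _ = ∑ b, ∑ a', P a' b x₀ y := sum_congr rfl fun b _ => hnsA b (x b) x₀ y
    _ = 1 := by rw [sum_comm, hnorm]

theorem instrumental_inequality_no_signalling_general
    (P : ZMod 2 → ZMod 2 → ZMod 2 → ZMod 2 → ℝ)
    (hnn : ∀ a b x y, 0 ≤ P a b x y)
    (hnorm : ∀ x y, ∑ a : ZMod 2, ∑ b : ZMod 2, P a b x y = 1)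
    (hnsA : ∀ b x x' y, ∑ a : ZMod 2, P a b x y = ∑ a : ZMod 2, P a b x' y)
    (p : ZMod 2 → ZMod 2 → ZMod 2 → ℝ)
    (hp : ∀ a b x, p a b x = P a b x a) :
    ∀ a : ZMod 2, ∑ b : ZMod 2, max (p a b 0) (p a b 1) ≤ 1 := by
  intro a
  have hmax : ∀ b, ∃ x, max (p a b 0) (p a b 1) = P a b x a := fun b => by
    rcases max_choice (p a b 0) (p a b 1) with h | h <;> exact ⟨_, h.trans (hp a b _)⟩
  choose x hx using hmax
  simp only [hx]
  exact sum_le_one_of_bob_marginal_indep P hnn hnorm hnsA a x a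

theorem instrumental_inequality_no_signalling
    (P : ZMod 2 → ZMod 2 → ZMod 2 → ZMod 2 → ℝ)
    (hnn : ∀ a b x y, 0 ≤ P a b x y)
    (hnorm : ∀ x y, ∑ a : ZMod 2, ∑ b : ZMod 2, P a b x y = 1)
    (hnsB : ∀ a x y y', ∑ b : ZMod 2, P a b x y = ∑ b : ZMod 2, P a b x y')
    (hnsA : ∀ b x x' y, ∑ a : ZMod 2, P a b x y = ∑ a : ZMod 2, P a b x' y)
    (p : ZMod 2 → ZMod 2 → ZMod 2 → ℝ)
    (hp : ∀ a b x, p a b x = P a b x a) :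
    ∀ a : ZMod 2, ∑ b : ZMod 2, max (p a b 0) (p a b 1) ≤ 1 :=
  instrumental_inequality_no_signalling_general P hnn hnorm hnsA p hp
end

section
/- The projected GYNI distribution p(a,b,c|x) defined by p(0,0,0|0)=p(1,0,1|0)=p(1,1,0|0)=1/3, p(0,1,1|1)=p(1,0,1|1)=p(1,1,0|1)=1/3 and 0 otherwise, cannot be written as a convex combination of the 32 deterministic strategies of the form a = f(x), b = g(a), c = h(b) with f,g,h : {0,1} → {0,1} (where for each deterministic strategy the induced distribution is the point mass at (f(x), g(f(x)), h(g(f(x)))) for each x). -/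
/-!
Every deterministic strategy produces, for each input `x`, a single outcome; and no strategy
produces more than one of the four outcome/input pairs `(000|0)`, `(110|0)`, `(011|1)`, `(101|1)`.
Hence every classical model satisfies the causal inequality
`p(000|0) + p(110|0) + p(011|1) + p(101|1) ≤ 1`, whereas the projected GYNI distribution gives `4/3`.
-/

open Finset

noncomputable def projGYNI (a b c x : ZMod 2) : ℝ :=
  if (x = 0 ∧ ((a, b, c) = ((0 : ZMod 2), (0 : ZMod 2), (0 : ZMod 2)) ∨
               (a, b, c) = (1, 0, 1) ∨ (a, b, c) = (1, 1, 0))) ∨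
     (x = 1 ∧ ((a, b, c) = ((0 : ZMod 2), (1 : ZMod 2), (1 : ZMod 2)) ∨
               (a, b, c) = (1, 0, 1) ∨ (a, b, c) = (1, 1, 0)))
  then (1 / 3 : ℝ) else 0

theorem Finset.sum_sum_mul_le_one {ι σ : Type*} [Fintype σ] (t : Finset ι) (w : σ → ℝ)
    (hw0 : ∀ s, 0 ≤ w s) (hw1 : ∑ s, w s = 1) (q : ι → σ → ℝ) (hq : ∀ s, ∑ i ∈ t, q i s ≤ 1) :
    ∑ i ∈ t, ∑ s, w s * q i s ≤ 1 := by
  rw [Finset.sum_comm]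
  calc ∑ s, ∑ i ∈ t, w s * q i s = ∑ s, w s * ∑ i ∈ t, q i s := by simp only [Finset.mul_sum]
    _ ≤ ∑ s, w s * 1 := by gcongr with s; exacts [hw0 s, hq s]
    _ = 1 := by simp [hw1]

def gyniEvents : Finset ((ZMod 2 × ZMod 2 × ZMod 2) × ZMod 2) :=
  {((0, 0, 0), 0), ((1, 1, 0), 0), ((0, 1, 1), 1), ((1, 0, 1), 1)}

abbrev Strategy := (ZMod 2 → ZMod 2) × (ZMod 2 → ZMod 2) × (ZMod 2 → ZMod 2)

namespace Strategy

def outcome (s : Strategy) (x : ZMod 2) : ZMod 2 × ZMod 2 × ZMod 2 :=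
  (s.1 x, s.2.1 (s.1 x), s.2.2 (s.2.1 (s.1 x)))

theorem indicator_eq_ite_outcome (s : Strategy) (a b c x : ZMod 2) :
    ((if a = s.1 x then 1 else 0) * (if b = s.2.1 a then 1 else 0) *
      (if c = s.2.2 b then 1 else 0) : ℝ) = if s.outcome x = (a, b, c) then 1 else 0 := by
  simp only [ite_zero_mul_ite_zero, mul_one, outcome, Prod.mk.injEq]
  grind

-- Any two of the four events require one of the six values `s.1 x`, `s.2.1 a`, `s.2.2 b` to be both 0 and 1.
theorem card_filter_outcome_gyniEvents_le_one (s : Strategy) :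
    #{e ∈ gyniEvents | s.outcome e.2 = e.1} ≤ 1 := by
  revert s
  decide

end Strategy

theorem sum_gyniEvents_classical_le_one (w : Strategy → ℝ) (hw0 : ∀ s, 0 ≤ w s)
    (hw1 : ∑ s, w s = 1) :
    ∑ e ∈ gyniEvents, ∑ s, w s * (if s.outcome e.2 = e.1 then 1 else 0) ≤ 1 := by
  refine Finset.sum_sum_mul_le_one _ w hw0 hw1 _ fun s => ?_
  rw [Finset.sum_boole]
  exact_mod_cast s.card_filter_outcome_gyniEvents_le_one

theorem sum_gyniEvents_projGYNI :
    ∑ e ∈ gyniEvents, projGYNI e.1.1 e.1.2.1 e.1.2.2 e.2 = 4 / 3 := by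
  norm_num [gyniEvents, projGYNI]

theorem projected_GYNI_not_classical :
    ¬ ∃ w : (ZMod 2 → ZMod 2) × (ZMod 2 → ZMod 2) × (ZMod 2 → ZMod 2) → ℝ,
      (∀ s, 0 ≤ w s) ∧ (∑ s, w s = 1) ∧
      (∀ a b c x : ZMod 2,
        projGYNI a b c x =
          ∑ s, w s * (if a = s.1 x then 1 else 0) *
                (if b = s.2.1 a then 1 else 0) *
                (if c = s.2.2 b then 1 else 0)) := by
  rintro ⟨w, hw0, hw1, hp⟩
  have hmodel : ∀ e ∈ gyniEvents, projGYNI e.1.1 e.1.2.1 e.1.2.2 e.2 =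
      ∑ s, w s * (if Strategy.outcome s e.2 = e.1 then 1 else 0) := by
    intro e _
    rw [hp]
    refine Finset.sum_congr rfl fun s _ => ?_
    rw [← Strategy.indicator_eq_ite_outcome]
    ring
  have h := sum_gyniEvents_classical_le_one w hw0 hw1
  rw [← Finset.sum_congr rfl hmodel, sum_gyniEvents_projGYNI] at h
  norm_num at h
end

section
/- The distribution p(a,c|x,z) = (1/2)·[a ⊕ c = x·z] (the PR box) cannot be written as p(a,c|x,z) = ∑_{λ₁,λ₂} q₁(λ₁)·q₂(λ₂)·p_A(a|x,λ₁)·p_C(c|z,λ₂) for any finite sets Λ₁, Λ₂, probability distributions q₁, q₂, and conditional distributions p_A, p_C; i.e., the PR box is not a product of independent local classical responses. -/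
/-!
With independent latent variables the response distribution factorizes into its marginals,
`p(a,c|x,z) = P_A(a|x) P_C(c|z)` with `P_A(a|x) = ∑ q₁ pA` and `P_C(c|z) = ∑ q₂ pC`.
At `x = z = 0` the PR box gives weight `1/2` to `(0,0)` and `(1,1)` but `0` to `(0,1)`, and no
product `u a * v c` can do that: `u 0 * v 0 ≠ 0` and `u 1 * v 1 ≠ 0` force `u 0 * v 1 ≠ 0`.
-/

open Finset

theorem sum_sum_mul_mul_mul_eq_sum_mul_sum {ι κ R : Type*} [CommSemiring R]
    (s : Finset ι) (t : Finset κ) (q₁ f : ι → R) (q₂ g : κ → R) :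
    ∑ i ∈ s, ∑ j ∈ t, q₁ i * q₂ j * f i * g j = (∑ i ∈ s, q₁ i * f i) * ∑ j ∈ t, q₂ j * g j := by
  rw [sum_mul_sum]
  exact sum_congr rfl fun _ _ => sum_congr rfl fun _ _ => by ring

theorem not_forall_eq_mul_of_offDiag_eq_zero {α R : Type*} [MulZeroClass R] [NoZeroDivisors R]
    {P : α → α → R} {a b : α} (ha : P a a ≠ 0) (hb : P b b ≠ 0) (hab : P a b = 0)
    (u v : α → R) : ¬ ∀ x y, P x y = u x * v y := by
  intro hP
  rw [hP] at ha hb hab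
  exact mul_ne_zero (left_ne_zero_of_mul ha) (right_ne_zero_of_mul hb) hab

theorem PRbox_not_product_of_independent_locals_general
    (Λ₁ Λ₂ : Type) [Fintype Λ₁] [Fintype Λ₂]
    (q₁ : Λ₁ → ℝ) (q₂ : Λ₂ → ℝ)
    (pA : ZMod 2 → ZMod 2 → Λ₁ → ℝ)
    (pC : ZMod 2 → ZMod 2 → Λ₂ → ℝ) :
    ¬ (∀ a c x z : ZMod 2,
        (if a + c = x * z then (1 / 2 : ℝ) else 0) =
          ∑ l₁, ∑ l₂, q₁ l₁ * q₂ l₂ * pA a x l₁ * pC c z l₂) := by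
  intro hPR
  refine not_forall_eq_mul_of_offDiag_eq_zero
    (P := fun a c => if a + c = 0 * 0 then (1 / 2 : ℝ) else 0) (a := 0) (b := 1)
    ((if_pos (by decide)).trans_ne (by norm_num)) ((if_pos (by decide)).trans_ne (by norm_num))
    (if_neg (by decide))
    (fun a => ∑ l₁, q₁ l₁ * pA a 0 l₁) (fun c => ∑ l₂, q₂ l₂ * pC c 0 l₂) fun a c => ?_
  rw [hPR, sum_sum_mul_mul_mul_eq_sum_mul_sum]

theorem PRbox_not_product_of_independent_locals
    (Λ₁ Λ₂ : Type) [Fintype Λ₁] [Fintype Λ₂]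
    (q₁ : Λ₁ → ℝ) (q₂ : Λ₂ → ℝ)
    (hq₁ : ∀ l, 0 ≤ q₁ l) (hq₁1 : ∑ l, q₁ l = 1)
    (hq₂ : ∀ l, 0 ≤ q₂ l) (hq₂1 : ∑ l, q₂ l = 1)
    (pA : ZMod 2 → ZMod 2 → Λ₁ → ℝ)
    (hpA : ∀ a x l, 0 ≤ pA a x l) (hpA1 : ∀ x l, ∑ a, pA a x l = 1)
    (pC : ZMod 2 → ZMod 2 → Λ₂ → ℝ)
    (hpC : ∀ c z l, 0 ≤ pC c z l) (hpC1 : ∀ z l, ∑ c, pC c z l = 1) :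
    ¬ (∀ a c x z : ZMod 2,
        (if a + c = x * z then (1 / 2 : ℝ) else 0) =
          ∑ l₁, ∑ l₂, q₁ l₁ * q₂ l₂ * pA a x l₁ * pC c z l₂) :=
  PRbox_not_product_of_independent_locals_general Λ₁ Λ₂ q₁ q₂ pA pC
end

section
/- The symmetric perfectly correlated triangle distribution p(a,b,c) = 1/2 if a = b = c and 0 otherwise (a,b,c ∈ {0,1}) cannot be realized in the triangle causal structure with independent classical latent variables: there are no finite sets Λ₁,Λ₂,Λ₃ with independent distributions q₁,q₂,q₃ and response functions p_A(a|λ₂,λ₃), p_B(b|λ₁,λ₃), p_C(c|λ₁,λ₂) such that p(a,b,c) = ∑_{λ₁,λ₂,λ₃} q₁(λ₁)q₂(λ₂)q₃(λ₃)·p_A(a|λ₂,λ₃)·p_B(b|λ₁,λ₃)·p_C(c|λ₁,λ₂). -/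
/-!
If three independent distributions on outcomes produce a product that vanishes off the diagonal,
all three are the same point mass. In a triangle model reproducing perfect correlation this applies
to the responses at every latent triple of positive weight; since any two such triples can be
linked through shared latent values, the point mass is the same everywhere on the support. Hence
the model outputs one fixed triple `(a₀, a₀, a₀)` with probability one, never `1/2`.
-/

open Finset

section PointMass

variable {α : Type*} [Fintype α] [DecidableEq α]

theorem eq_single_of_sum_eq_one {v : α → ℝ} {a₀ : α} (hv : ∑ a, v a = 1)
    (h : ∀ a ≠ a₀, v a = 0) : v = Pi.single a₀ 1 := by
  have hv₀ : v a₀ = 1 := by rwa [Fintype.sum_eq_single a₀ h] at hv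
  ext a
  by_cases ha : a = a₀ <;> simp [ha, hv₀, h]

theorem exists_eq_single_of_mul_mul_eq_zero {u v w : α → ℝ}
    (hu : ∑ a, u a = 1) (hv : ∑ a, v a = 1) (hw : ∑ a, w a = 1)
    (h : ∀ a b c, ¬(a = b ∧ b = c) → u a * v b * w c = 0) :
    ∃ a₀, u = Pi.single a₀ 1 ∧ v = Pi.single a₀ 1 ∧ w = Pi.single a₀ 1 := by
  obtain ⟨a₀, -, hua₀⟩ := Finset.exists_ne_zero_of_sum_ne_zero (hu ▸ one_ne_zero)
  have hv₀ : v = Pi.single a₀ 1 := eq_single_of_sum_eq_one hv fun b hb => by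
    have : u a₀ * v b * ∑ c, w c = 0 :=
      (Finset.mul_sum _ _ _).trans <| Finset.sum_eq_zero fun c _ =>
        h a₀ b c fun hab => hb hab.1.symm
    simpa [hw, hua₀] using this
  have hw₀ : w = Pi.single a₀ 1 := eq_single_of_sum_eq_one hw fun c hc => by
    simpa [hv₀, hua₀] using h a₀ a₀ c fun habc => hc habc.2.symm
  have hu₀ : u = Pi.single a₀ 1 := eq_single_of_sum_eq_one hu fun a ha => by
    simpa [hv₀, hw₀] using h a a₀ a₀ fun habc => ha habc.1
  exact ⟨a₀, hu₀, hv₀, hw₀⟩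

end PointMass

section Triangle

variable {α Λ₁ Λ₂ Λ₃ : Type*} [Fintype Λ₁] [Fintype Λ₂] [Fintype Λ₃]

theorem eq_zero_of_sum_sum_sum_eq_zero {f : Λ₁ → Λ₂ → Λ₃ → ℝ} (hf : ∀ x y z, 0 ≤ f x y z)
    (h : ∑ x, ∑ y, ∑ z, f x y z = 0) (x : Λ₁) (y : Λ₂) (z : Λ₃) : f x y z = 0 := by
  simp only [← Fintype.sum_prod_type'] at h
  exact congrFun ((Fintype.sum_eq_zero_iff_of_nonneg fun _ => hf _ _ _).1 h) (x, y, z)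

def triangleDistribution (q₁ : Λ₁ → ℝ) (q₂ : Λ₂ → ℝ) (q₃ : Λ₃ → ℝ)
    (pA : α → Λ₂ → Λ₃ → ℝ) (pB : α → Λ₁ → Λ₃ → ℝ) (pC : α → Λ₁ → Λ₂ → ℝ)
    (a b c : α) : ℝ :=
  ∑ l₁, ∑ l₂, ∑ l₃, q₁ l₁ * q₂ l₂ * q₃ l₃ * pA a l₂ l₃ * pB b l₁ l₃ * pC c l₁ l₂

variable [Fintype α] [DecidableEq α]
  {q₁ : Λ₁ → ℝ} {q₂ : Λ₂ → ℝ} {q₃ : Λ₃ → ℝ}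
  {pA : α → Λ₂ → Λ₃ → ℝ} {pB : α → Λ₁ → Λ₃ → ℝ} {pC : α → Λ₁ → Λ₂ → ℝ}

theorem triangle_responses_eq_single
    (hq₁ : ∀ l, 0 ≤ q₁ l) (hq₂ : ∀ l, 0 ≤ q₂ l) (hq₃ : ∀ l, 0 ≤ q₃ l)
    (hpA : ∀ a l₂ l₃, 0 ≤ pA a l₂ l₃) (hpA1 : ∀ l₂ l₃, ∑ a, pA a l₂ l₃ = 1)
    (hpB : ∀ b l₁ l₃, 0 ≤ pB b l₁ l₃) (hpB1 : ∀ l₁ l₃, ∑ b, pB b l₁ l₃ = 1)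
    (hpC : ∀ c l₁ l₂, 0 ≤ pC c l₁ l₂) (hpC1 : ∀ l₁ l₂, ∑ c, pC c l₁ l₂ = 1)
    (hP : ∀ a b c, ¬(a = b ∧ b = c) → triangleDistribution q₁ q₂ q₃ pA pB pC a b c = 0)
    (l₁ : Λ₁) (l₂ : Λ₂) (l₃ : Λ₃) (h₁ : q₁ l₁ ≠ 0) (h₂ : q₂ l₂ ≠ 0) (h₃ : q₃ l₃ ≠ 0) :
    ∃ a₀, (fun a => pA a l₂ l₃) = Pi.single a₀ 1 ∧ (fun b => pB b l₁ l₃) = Pi.single a₀ 1 ∧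
      (fun c => pC c l₁ l₂) = Pi.single a₀ 1 := by
  refine exists_eq_single_of_mul_mul_eq_zero (hpA1 l₂ l₃) (hpB1 l₁ l₃) (hpC1 l₁ l₂)
    fun a b c hne => ?_
  have hterm := eq_zero_of_sum_sum_sum_eq_zero
    (fun l₁ l₂ l₃ => by
      have := hq₁ l₁; have := hq₂ l₂; have := hq₃ l₃
      have := hpA a l₂ l₃; have := hpB b l₁ l₃; have := hpC c l₁ l₂
      positivity)
    (hP a b c hne) l₁ l₂ l₃
  simpa [h₁, h₂, h₃, or_assoc] using hterm

theorem exists_triangle_responses_eq_single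
    (hq₁ : ∀ l, 0 ≤ q₁ l) (hq₁1 : ∑ l, q₁ l = 1)
    (hq₂ : ∀ l, 0 ≤ q₂ l) (hq₂1 : ∑ l, q₂ l = 1)
    (hq₃ : ∀ l, 0 ≤ q₃ l) (hq₃1 : ∑ l, q₃ l = 1)
    (hpA : ∀ a l₂ l₃, 0 ≤ pA a l₂ l₃) (hpA1 : ∀ l₂ l₃, ∑ a, pA a l₂ l₃ = 1)
    (hpB : ∀ b l₁ l₃, 0 ≤ pB b l₁ l₃) (hpB1 : ∀ l₁ l₃, ∑ b, pB b l₁ l₃ = 1)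
    (hpC : ∀ c l₁ l₂, 0 ≤ pC c l₁ l₂) (hpC1 : ∀ l₁ l₂, ∑ c, pC c l₁ l₂ = 1)
    (hP : ∀ a b c, ¬(a = b ∧ b = c) → triangleDistribution q₁ q₂ q₃ pA pB pC a b c = 0) :
    ∃ a₀, (∀ l₂ l₃, q₂ l₂ ≠ 0 → q₃ l₃ ≠ 0 → (fun a => pA a l₂ l₃) = Pi.single a₀ 1) ∧
      (∀ l₁ l₃, q₁ l₁ ≠ 0 → q₃ l₃ ≠ 0 → (fun b => pB b l₁ l₃) = Pi.single a₀ 1) ∧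
      (∀ l₁ l₂, q₁ l₁ ≠ 0 → q₂ l₂ ≠ 0 → (fun c => pC c l₁ l₂) = Pi.single a₀ 1) := by
  have H := triangle_responses_eq_single hq₁ hq₂ hq₃ hpA hpA1 hpB hpB1 hpC hpC1 hP
  obtain ⟨m₁, -, hm₁⟩ := Finset.exists_ne_zero_of_sum_ne_zero (hq₁1 ▸ one_ne_zero)
  obtain ⟨m₂, -, hm₂⟩ := Finset.exists_ne_zero_of_sum_ne_zero (hq₂1 ▸ one_ne_zero)
  obtain ⟨m₃, -, hm₃⟩ := Finset.exists_ne_zero_of_sum_ne_zero (hq₃1 ▸ one_ne_zero)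
  obtain ⟨a₀, hA₀, hB₀, hC₀⟩ := H _ _ _ hm₁ hm₂ hm₃
  refine ⟨a₀, fun l₂ l₃ h₂ h₃ => ?_, fun l₁ l₃ h₁ h₃ => ?_, fun l₁ l₂ h₁ h₂ => ?_⟩
  · obtain ⟨_, hA, hB, -⟩ := H _ _ _ hm₁ h₂ h₃
    obtain ⟨_, -, hB', hC'⟩ := H _ _ _ hm₁ hm₂ h₃
    exact hA.trans <| hB.symm.trans <| hB'.trans <| hC'.symm.trans hC₀
  · obtain ⟨_, hA, hB, -⟩ := H _ _ _ h₁ hm₂ h₃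
    obtain ⟨_, hA', -, hC'⟩ := H _ _ _ hm₁ hm₂ h₃
    exact hB.trans <| hA.symm.trans <| hA'.trans <| hC'.symm.trans hC₀
  · obtain ⟨_, -, hB, hC⟩ := H _ _ _ h₁ h₂ hm₃
    obtain ⟨_, hA', hB', -⟩ := H _ _ _ h₁ hm₂ hm₃
    exact hC.trans <| hB.symm.trans <| hB'.trans <| hA'.symm.trans hA₀

theorem exists_triangleDistribution_diag_eq_one
    (hq₁ : ∀ l, 0 ≤ q₁ l) (hq₁1 : ∑ l, q₁ l = 1)
    (hq₂ : ∀ l, 0 ≤ q₂ l) (hq₂1 : ∑ l, q₂ l = 1)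
    (hq₃ : ∀ l, 0 ≤ q₃ l) (hq₃1 : ∑ l, q₃ l = 1)
    (hpA : ∀ a l₂ l₃, 0 ≤ pA a l₂ l₃) (hpA1 : ∀ l₂ l₃, ∑ a, pA a l₂ l₃ = 1)
    (hpB : ∀ b l₁ l₃, 0 ≤ pB b l₁ l₃) (hpB1 : ∀ l₁ l₃, ∑ b, pB b l₁ l₃ = 1)
    (hpC : ∀ c l₁ l₂, 0 ≤ pC c l₁ l₂) (hpC1 : ∀ l₁ l₂, ∑ c, pC c l₁ l₂ = 1)
    (hP : ∀ a b c, ¬(a = b ∧ b = c) → triangleDistribution q₁ q₂ q₃ pA pB pC a b c = 0) :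
    ∃ a₀, triangleDistribution q₁ q₂ q₃ pA pB pC a₀ a₀ a₀ = 1 := by
  obtain ⟨a₀, hA, hB, hC⟩ := exists_triangle_responses_eq_single
    hq₁ hq₁1 hq₂ hq₂1 hq₃ hq₃1 hpA hpA1 hpB hpB1 hpC hpC1 hP
  have hterm : ∀ l₁ l₂ l₃, q₁ l₁ * q₂ l₂ * q₃ l₃ * pA a₀ l₂ l₃ * pB a₀ l₁ l₃ * pC a₀ l₁ l₂ =
      q₁ l₁ * q₂ l₂ * q₃ l₃ := by
    intro l₁ l₂ l₃
    by_cases h₁ : q₁ l₁ = 0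
    · simp [h₁]
    by_cases h₂ : q₂ l₂ = 0
    · simp [h₂]
    by_cases h₃ : q₃ l₃ = 0
    · simp [h₃]
    rw [congrFun (hA l₂ l₃ h₂ h₃) a₀, congrFun (hB l₁ l₃ h₁ h₃) a₀,
      congrFun (hC l₁ l₂ h₁ h₂) a₀]
    simp
  exact ⟨a₀, by simp [triangleDistribution, hterm, ← Finset.mul_sum, hq₁1, hq₂1, hq₃1]⟩

end Triangle

theorem triangle_perfect_correlation_not_classical
    (Λ₁ Λ₂ Λ₃ : Type) [Fintype Λ₁] [Fintype Λ₂] [Fintype Λ₃]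
    (q₁ : Λ₁ → ℝ) (q₂ : Λ₂ → ℝ) (q₃ : Λ₃ → ℝ)
    (hq₁ : ∀ l, 0 ≤ q₁ l) (hq₁1 : ∑ l, q₁ l = 1)
    (hq₂ : ∀ l, 0 ≤ q₂ l) (hq₂1 : ∑ l, q₂ l = 1)
    (hq₃ : ∀ l, 0 ≤ q₃ l) (hq₃1 : ∑ l, q₃ l = 1)
    (pA : ZMod 2 → Λ₂ → Λ₃ → ℝ)
    (hpA : ∀ a l₂ l₃, 0 ≤ pA a l₂ l₃) (hpA1 : ∀ l₂ l₃, ∑ a, pA a l₂ l₃ = 1)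
    (pB : ZMod 2 → Λ₁ → Λ₃ → ℝ)
    (hpB : ∀ b l₁ l₃, 0 ≤ pB b l₁ l₃) (hpB1 : ∀ l₁ l₃, ∑ b, pB b l₁ l₃ = 1)
    (pC : ZMod 2 → Λ₁ → Λ₂ → ℝ)
    (hpC : ∀ c l₁ l₂, 0 ≤ pC c l₁ l₂) (hpC1 : ∀ l₁ l₂, ∑ c, pC c l₁ l₂ = 1) :
    ¬ (∀ a b c : ZMod 2,
        (if a = b ∧ b = c then (1 / 2 : ℝ) else 0) =
          ∑ l₁, ∑ l₂, ∑ l₃,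
            q₁ l₁ * q₂ l₂ * q₃ l₃ * pA a l₂ l₃ * pB b l₁ l₃ * pC c l₁ l₂) := by
  intro h
  have hP : ∀ a b c, ¬(a = b ∧ b = c) → triangleDistribution q₁ q₂ q₃ pA pB pC a b c = 0 :=
    fun a b c hne => by rw [triangleDistribution, ← h, if_neg hne]
  obtain ⟨a₀, hdiag⟩ := exists_triangleDistribution_diag_eq_one
    hq₁ hq₁1 hq₂ hq₂1 hq₃ hq₃1 hpA hpA1 hpB hpB1 hpC hpC1 hP
  have h₀ := h a₀ a₀ a₀
  rw [if_pos ⟨rfl, rfl⟩, ← triangleDistribution, hdiag] at h₀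
  norm_num at h₀
end
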